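/- arXiv:1510.03998 — 2 statements merged into one kernel-verified Lean document; each statement's English description precedes it below -/
import Mathlib

section
/- For every interval graph G, the graph G_α is an interval graph and ν(G_α) = ν(G) + 1. -/
open Set

/-- An interval representation of a simple graph `G`: each vertex `v` gets a nonempty
closed interval `[l v, r v] ⊆ ℝ`, and two distinct vertices are adjacent iff their
intervals intersect. -/
structure IntervalRep {V : Type*} (G : SimpleGraph V) where
  l : V → ℝ
  r : V → ℝ
  le : ∀ v, l v ≤ r v
  adj_iff : ∀ u v : V, u ≠ v →
    (G.Adj u v ↔ (Icc (l u) (r u) ∩ Icc (l v) (r v)).Nonempty)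

namespace IntervalRep

variable {V : Type*} {G : SimpleGraph V}

/-- The interval of a vertex. -/
def itv (R : IntervalRep G) (v : V) : Set ℝ := Icc (R.l v) (R.r v)

/-- The nesting `ν(R)`: the maximum length of a chain of strictly nested vertex intervals. -/
noncomputable def nesting (R : IntervalRep G) : ℕ :=
  sSup {k : ℕ | ∃ f : Fin k → V, ∀ i j : Fin k, i < j → R.itv (f i) ⊂ R.itv (f j)}

/-- `ν_R(x)`: the maximum length of a chain of strictly nested vertex intervals whose
outermost interval is `I(x)` (counting `x` itself). -/
noncomputable def nuAt (R : IntervalRep G) (x : V) : ℕ :=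
  sSup {k : ℕ | ∃ f : Fin k → V,
    (∀ i j : Fin k, i < j → R.itv (f i) ⊂ R.itv (f j)) ∧
    ∃ h : 0 < k, f ⟨k - 1, by omega⟩ = x}

end IntervalRep

/-- A graph is an interval graph if it admits an interval representation. -/
def IsIntervalGraph {V : Type*} (G : SimpleGraph V) : Prop := Nonempty (IntervalRep G)

/-- The nesting number `ν(G)`: the minimum nesting over all interval representations. -/
noncomputable def nu {V : Type*} (G : SimpleGraph V) : ℕ :=
  sInf {n : ℕ | ∃ R : IntervalRep G, R.nesting = n}

/-- `G_α`: add vertices `u, a₁, a₂, b₁, b₂` (coded as `0,1,2,3,4`), with `u` adjacent to all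
of `G` and to `a₁, b₁`; `a₁ ~ a₂` and `b₁ ~ b₂`. -/
def Galpha {V : Type*} (G : SimpleGraph V) : SimpleGraph (V ⊕ Fin 5) :=
  SimpleGraph.fromRel fun x y =>
    match x, y with
    | Sum.inl a, Sum.inl b => G.Adj a b
    | Sum.inl _, Sum.inr i => i = 0
    | Sum.inr _, Sum.inl _ => False
    | Sum.inr i, Sum.inr j =>
        i = 0 ∧ j = 1 ∨ i = 1 ∧ j = 2 ∨ i = 0 ∧ j = 3 ∨ i = 3 ∧ j = 4

/-- `G_β`: add vertices `u, a₁, a₂` (coded as `0,1,2`), with `u` adjacent to all of `G`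
and to `a₁`; `a₁ ~ a₂`. -/
def Gbeta {V : Type*} (G : SimpleGraph V) : SimpleGraph (V ⊕ Fin 3) :=
  SimpleGraph.fromRel fun x y =>
    match x, y with
    | Sum.inl a, Sum.inl b => G.Adj a b
    | Sum.inl _, Sum.inr i => i = 0
    | Sum.inr _, Sum.inl _ => False
    | Sum.inr i, Sum.inr j => i = 0 ∧ j = 1 ∨ i = 1 ∧ j = 2

/-- `G_γ`: add vertices `u, v, a₁, a₂, b₁, b₂` (coded as `0,1,2,3,4,5`), with `u ~ v`, both
adjacent to all of `G`; `u ~ a₁`, `a₁ ~ a₂`, `v ~ b₁`, `b₁ ~ b₂`. -/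
def Ggamma {V : Type*} (G : SimpleGraph V) : SimpleGraph (V ⊕ Fin 6) :=
  SimpleGraph.fromRel fun x y =>
    match x, y with
    | Sum.inl a, Sum.inl b => G.Adj a b
    | Sum.inl _, Sum.inr i => i = 0 ∨ i = 1
    | Sum.inr _, Sum.inl _ => False
    | Sum.inr i, Sum.inr j =>
        i = 0 ∧ j = 1 ∨ i = 0 ∧ j = 2 ∨ i = 2 ∧ j = 3 ∨ i = 1 ∧ j = 4 ∨ i = 4 ∧ j = 5

/-- The disjoint union of a family of graphs, on the sigma type of their vertex sets. -/
def sigmaGraph {p : ℕ} {V : Fin p → Type*} (G : ∀ i, SimpleGraph (V i)) :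
    SimpleGraph (Σ i, V i) :=
  SimpleGraph.fromRel fun x y => ∃ h : x.1 = y.1, (G y.1).Adj (h ▸ x.2) y.2

/-- The graph obtained from `H` by adding one new vertex adjacent to every vertex of `H`. -/
def joinVertex {W : Type*} (H : SimpleGraph W) : SimpleGraph (W ⊕ Unit) :=
  SimpleGraph.fromRel fun x y =>
    match x, y with
    | Sum.inl a, Sum.inl b => H.Adj a b
    | Sum.inl _, Sum.inr _ => True
    | _, _ => False

/-!
Upper bound: squeeze a representation of `G` of nesting `ν(G)` into `(-2, 2)` and add
`u = [-2, 2]`, `a₁ = [-3, -2]`, `a₂ = [-4, -3]`, `b₁ = [2, 3]`, `b₂ = [3, 4]`. None of the new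
intervals lies strictly inside another interval, so only the top of a chain can be new.

Lower bound: in every representation of `G_α` the pendant paths `u a₁ a₂` and `u b₁ b₂` make
`I(a₁)` and `I(b₁)` cover the two endpoints of `I(u)`, so every interval of `G` lies strictly
inside `I(u)`, and `I(u)` extends any chain of `G` by one.
-/

lemma Fin.strictMono_snoc {α : Type*} [Preorder α] {n : ℕ} {f : Fin n → α} {a : α}
    (hf : StrictMono f) (ha : ∀ i, f i < a) : StrictMono (Fin.snoc f a : Fin (n + 1) → α) := by
  intro i j hij
  induction j using Fin.lastCases with
  | last =>
    induction i using Fin.lastCases with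
    | last => exact absurd hij (lt_irrefl _)
    | cast i => simpa using ha i
  | cast j =>
    induction i using Fin.lastCases with
    | last => exact absurd hij (not_lt.mpr (Fin.le_last _))
    | cast i => simpa using hf (Fin.castSucc_lt_castSucc_iff.mp hij)

section Intervals

variable {α : Type*} [LinearOrder α] {a b c d : α}

lemma Icc_inter_Icc_nonempty_iff (hab : a ≤ b) (hcd : c ≤ d) :
    (Icc a b ∩ Icc c d).Nonempty ↔ a ≤ d ∧ c ≤ b := by
  rw [Icc_inter_Icc, nonempty_Icc, max_le_iff, le_min_iff, le_min_iff]
  tauto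

lemma left_mem_or_right_mem_of_inter_nonempty (hX : (Icc a b ∩ Icc c d).Nonempty) {p : α}
    (hp : p ∈ Icc a b) (hpU : p ∉ Icc c d) : c ∈ Icc a b ∨ d ∈ Icc a b := by
  obtain ⟨q, ⟨haq, hqb⟩, hcq, hqd⟩ := hX
  obtain ⟨hap, hpb⟩ := hp
  rw [mem_Icc, not_and_or, not_le, not_le] at hpU
  rcases hpU with hpc | hdp
  · exact Or.inl ⟨by order, by order⟩
  · exact Or.inr ⟨by order, by order⟩

lemma Icc_ssubset_Icc_of_inter_nonempty (hX : (Icc a b ∩ Icc c d).Nonempty)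
    (hc : c ∉ Icc a b) (hd : d ∉ Icc a b) : Icc a b ⊂ Icc c d := by
  obtain ⟨q, ⟨haq, hqb⟩, hcq, hqd⟩ := hX
  have hca : c < a := lt_of_not_ge fun h => hc ⟨h, by order⟩
  have hbd : b < d := lt_of_not_ge fun h => hd ⟨by order, h⟩
  exact Icc_ssubset_Icc_left (by order) hca hbd.le

lemma StrictMono.Icc_subset_Icc_iff {β : Type*} [Preorder β] {φ : α → β} (hφ : StrictMono φ)
    (hab : a ≤ b) : Icc (φ a) (φ b) ⊆ Icc (φ c) (φ d) ↔ Icc a b ⊆ Icc c d := by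
  rw [Set.Icc_subset_Icc_iff (hφ.monotone hab), Set.Icc_subset_Icc_iff hab, hφ.le_iff_le,
    hφ.le_iff_le]

lemma StrictMono.Icc_ssubset_Icc_iff {β : Type*} [Preorder β] {φ : α → β} (hφ : StrictMono φ)
    (hab : a ≤ b) (hcd : c ≤ d) :
    Icc (φ a) (φ b) ⊂ Icc (φ c) (φ d) ↔ Icc a b ⊂ Icc c d := by
  rw [ssubset_iff_subset_not_superset, ssubset_iff_subset_not_superset,
    hφ.Icc_subset_Icc_iff hab, hφ.Icc_subset_Icc_iff hcd]

end Intervals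

namespace IntervalRep

variable {V W : Type*} {G : SimpleGraph V} {H : SimpleGraph W}

lemma itv_inter_nonempty_iff (R : IntervalRep G) {u v : V} (huv : u ≠ v) :
    (R.itv u ∩ R.itv v).Nonempty ↔ G.Adj u v :=
  (R.adj_iff u v huv).symm

lemma disjoint_itv_iff (R : IntervalRep G) {u v : V} (huv : u ≠ v) :
    Disjoint (R.itv u) (R.itv v) ↔ ¬ G.Adj u v := by
  rw [← R.itv_inter_nonempty_iff huv, not_nonempty_iff_eq_empty, disjoint_iff_inter_eq_empty]

def chainLengths (R : IntervalRep G) : Set ℕ :=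
  {k | ∃ f : Fin k → V, StrictMono (R.itv ∘ f)}

lemma zero_mem_chainLengths (R : IntervalRep G) : 0 ∈ R.chainLengths :=
  ⟨Fin.elim0, fun i => i.elim0⟩

lemma bddAbove_chainLengths [Finite V] (R : IntervalRep G) : BddAbove R.chainLengths := by
  refine ⟨Nat.card V, ?_⟩
  rintro k ⟨f, hf⟩
  simpa using Nat.card_le_card_of_injective f hf.injective.of_comp

lemma le_nesting [Finite V] (R : IntervalRep G) {k : ℕ} (f : Fin k → V)
    (hf : StrictMono (R.itv ∘ f)) : k ≤ R.nesting :=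
  le_csSup R.bddAbove_chainLengths ⟨f, hf⟩

lemma nesting_le (R : IntervalRep G) {n : ℕ}
    (h : ∀ k (f : Fin k → V), StrictMono (R.itv ∘ f) → k ≤ n) : R.nesting ≤ n :=
  csSup_le ⟨0, R.zero_mem_chainLengths⟩ fun k ⟨f, hf⟩ => h k f hf

lemma exists_strictMono_itv_comp_nesting [Finite V] (R : IntervalRep G) :
    ∃ f : Fin R.nesting → V, StrictMono (R.itv ∘ f) :=
  Nat.sSup_mem ⟨0, R.zero_mem_chainLengths⟩ R.bddAbove_chainLengths

def compStrictMono (R : IntervalRep G) {φ : ℝ → ℝ} (hφ : StrictMono φ) : IntervalRep G where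
  l := φ ∘ R.l
  r := φ ∘ R.r
  le v := hφ.monotone (R.le v)
  adj_iff u v huv := by
    rw [R.adj_iff u v huv, Icc_inter_Icc_nonempty_iff (R.le u) (R.le v)]
    exact ((Icc_inter_Icc_nonempty_iff (hφ.monotone (R.le u)) (hφ.monotone (R.le v))).trans
      (and_congr hφ.le_iff_le hφ.le_iff_le)).symm

lemma itv_compStrictMono_ssubset_iff (R : IntervalRep G) {φ : ℝ → ℝ} (hφ : StrictMono φ)
    {u v : V} : (R.compStrictMono hφ).itv u ⊂ (R.compStrictMono hφ).itv v ↔ R.itv u ⊂ R.itv v :=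
  hφ.Icc_ssubset_Icc_iff (R.le u) (R.le v)

lemma nesting_compStrictMono (R : IntervalRep G) {φ : ℝ → ℝ} (hφ : StrictMono φ) :
    (R.compStrictMono hφ).nesting = R.nesting := by
  simp only [nesting, itv_compStrictMono_ssubset_iff]

def comap (R : IntervalRep G) (φ : H ↪g G) : IntervalRep H where
  l := R.l ∘ φ
  r := R.r ∘ φ
  le v := R.le (φ v)
  adj_iff _ _ huv := φ.map_adj_iff.symm.trans (R.adj_iff _ _ (φ.injective.ne huv))

lemma nesting_comap_add_one_le [Finite V] (R : IntervalRep G) (φ : H ↪g G) {w : V}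
    (hw : ∀ v, R.itv (φ v) ⊂ R.itv w) : (R.comap φ).nesting + 1 ≤ R.nesting := by
  have : Finite W := Finite.of_injective φ φ.injective
  obtain ⟨f, hf⟩ := (R.comap φ).exists_strictMono_itv_comp_nesting
  refine R.le_nesting (Fin.snoc (φ ∘ f) w) ?_
  rw [Fin.comp_snoc]
  exact Fin.strictMono_snoc hf fun i => hw (f i)

lemma left_mem_or_right_mem_itv_of_adj (R : IntervalRep G) {x y u : V} (hxu : G.Adj x u)
    (hyx : G.Adj y x) (hyu : ¬ G.Adj y u) (hyu_ne : y ≠ u) :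
    R.l u ∈ R.itv x ∨ R.r u ∈ R.itv x := by
  obtain ⟨p, hpy, hpx⟩ := (R.itv_inter_nonempty_iff hyx.ne).mpr hyx
  refine left_mem_or_right_mem_of_inter_nonempty ((R.itv_inter_nonempty_iff hxu.ne).mpr hxu) hpx
    fun hpu => hyu ((R.itv_inter_nonempty_iff hyu_ne).mp ⟨p, hpy, hpu⟩)

lemma itv_ssubset_of_adj (R : IntervalRep G) {x u : V} (hxu : G.Adj x u)
    (hl : R.l u ∉ R.itv x) (hr : R.r u ∉ R.itv x) : R.itv x ⊂ R.itv u :=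
  Icc_ssubset_Icc_of_inter_nonempty ((R.itv_inter_nonempty_iff hxu.ne).mpr hxu) hl hr

end IntervalRep

lemma nu_le_nesting {V : Type*} {G : SimpleGraph V} (R : IntervalRep G) : nu G ≤ R.nesting :=
  Nat.sInf_le ⟨R, rfl⟩

lemma IsIntervalGraph.exists_nesting_eq_nu {V : Type*} {G : SimpleGraph V}
    (hG : IsIntervalGraph G) : ∃ R : IntervalRep G, R.nesting = nu G :=
  let ⟨R⟩ := hG
  Nat.sInf_mem (s := {n | ∃ R : IntervalRep G, R.nesting = n}) ⟨R.nesting, R, rfl⟩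

section Galpha

variable {V : Type*} {G : SimpleGraph V}

open Sum

lemma Galpha.adj_inl_inl {v w : V} : (Galpha G).Adj (inl v) (inl w) ↔ G.Adj v w := by
  simp only [Galpha, SimpleGraph.fromRel_adj, ne_eq, inl.injEq]
  exact ⟨fun ⟨_, h⟩ => h.elim id G.adj_symm, fun h => ⟨h.ne, Or.inl h⟩⟩

def Galpha.inlEmbedding (G : SimpleGraph V) : G ↪g Galpha G where
  toEmbedding := Function.Embedding.inl
  map_rel_iff' := Galpha.adj_inl_inl

def IntervalRep.alphaExtend (R : IntervalRep G) (hl : ∀ v, -2 < R.l v) (hr : ∀ v, R.r v < 2) :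
    IntervalRep (Galpha G) where
  l := Sum.elim R.l ![-2, -3, -4, 2, 3]
  r := Sum.elim R.r ![2, -2, -3, 3, 4]
  le
    | inl v => R.le v
    | inr i => by fin_cases i <;> norm_num
  adj_iff x y hxy := by
    have adj_inl_inr (v : V) (i : Fin 5) : (Galpha G).Adj (inl v) (inr i) ↔
        (Icc (R.l v) (R.r v) ∩ Icc (![-2, -3, -4, 2, 3] i) (![2, -2, -3, 3, 4] i)).Nonempty := by
      fin_cases i <;> rw [Icc_inter_Icc_nonempty_iff (R.le v) (by norm_num)] <;>
        simp [Galpha] <;> (try intro) <;> (try constructor) <;> linarith [hl v, hr v, R.le v]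
    match x, y with
    | inl v, inl w =>
      exact Galpha.adj_inl_inl.trans (R.adj_iff v w fun h => hxy (congrArg inl h))
    | inl v, inr i => exact adj_inl_inr v i
    | inr i, inl v => rw [SimpleGraph.adj_comm, inter_comm]; exact adj_inl_inr v i
    | inr i, inr j =>
      fin_cases i <;> fin_cases j <;> first
        | exact absurd rfl hxy
        | simp only [elim_inr]
          rw [Icc_inter_Icc_nonempty_iff (by norm_num) (by norm_num)]
          norm_num [Galpha] <;> decide

namespace IntervalRep

variable (R : IntervalRep G) (hl : ∀ v, -2 < R.l v) (hr : ∀ v, R.r v < 2)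

lemma not_itv_alphaExtend_inr_ssubset (i : Fin 5) (y : V ⊕ Fin 5) :
    ¬ (R.alphaExtend hl hr).itv (inr i) ⊂ (R.alphaExtend hl hr).itv y := by
  intro h
  have hsub := h.subset
  rw [itv, itv, Icc_subset_Icc_iff ((R.alphaExtend hl hr).le _)] at hsub
  match y with
  | inl v => fin_cases i <;> simp [alphaExtend] at hsub <;> linarith [hl v, hr v]
  | inr j =>
    fin_cases i <;> fin_cases j <;> first
      | exact ssubset_irrefl _ h
      | norm_num [alphaExtend] at hsub

lemma nesting_alphaExtend_le [Finite V] : (R.alphaExtend hl hr).nesting ≤ R.nesting + 1 := by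
  refine nesting_le _ fun k f hf => ?_
  obtain _ | m := k
  · omega
  have hinl (i : Fin m) : ∃ v, f i.castSucc = inl v := by
    cases hfi : f i.castSucc with
    | inl v => exact ⟨v, rfl⟩
    | inr j =>
      have := hf (Fin.castSucc_lt_succ (i := i))
      simp only [Function.comp_apply, hfi] at this
      exact absurd this (R.not_itv_alphaExtend_inr_ssubset hl hr j _)
  choose g hg using hinl
  have hchain : R.itv ∘ g = (R.alphaExtend hl hr).itv ∘ f ∘ Fin.castSucc := by
    ext1 i
    simp only [Function.comp_apply, hg]
    rfl
  have := R.le_nesting g (hchain ▸ hf.comp Fin.strictMono_castSucc)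
  omega

lemma itv_inl_ssubset_itv_apex (S : IntervalRep (Galpha G)) (x : V) :
    S.itv (inl x) ⊂ S.itv (inr 0) := by
  have ha := S.left_mem_or_right_mem_itv_of_adj (x := inr 1) (y := inr 2) (u := inr 0)
    (by simp [Galpha]) (by simp [Galpha]) (by simp [Galpha]) (by simp)
  have hb := S.left_mem_or_right_mem_itv_of_adj (x := inr 3) (y := inr 4) (u := inr 0)
    (by simp [Galpha]) (by simp [Galpha]) (by simp [Galpha]) (by simp)
  have hab := (S.disjoint_itv_iff (u := inr 1) (v := inr 3) (by simp)).mpr (by simp [Galpha])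
  have hxa := (S.disjoint_itv_iff (u := inl x) (v := inr 1) (by simp)).mpr (by simp [Galpha])
  have hxb := (S.disjoint_itv_iff (u := inl x) (v := inr 3) (by simp)).mpr (by simp [Galpha])
  have hends : S.l (inr 0) ∈ S.itv (inr 1) ∪ S.itv (inr 3) ∧
      S.r (inr 0) ∈ S.itv (inr 1) ∪ S.itv (inr 3) := by
    rcases ha with ha | ha <;> rcases hb with hb | hb
    · exact absurd hb (disjoint_left.mp hab ha)
    · exact ⟨Or.inl ha, Or.inr hb⟩
    · exact ⟨Or.inr hb, Or.inl ha⟩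
    · exact absurd hb (disjoint_left.mp hab ha)
  have hx := disjoint_union_right.mpr ⟨hxa, hxb⟩
  exact S.itv_ssubset_of_adj (by simp [Galpha]) (disjoint_right.mp hx hends.1)
    (disjoint_right.mp hx hends.2)

lemma nu_add_one_le_nesting [Finite V] (S : IntervalRep (Galpha G)) : nu G + 1 ≤ S.nesting :=
  calc nu G + 1 ≤ (S.comap (Galpha.inlEmbedding G)).nesting + 1 := by
        gcongr
        exact nu_le_nesting _
    _ ≤ S.nesting := S.nesting_comap_add_one_le _ S.itv_inl_ssubset_itv_apex

end IntervalRep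

end Galpha

lemma Real.neg_two_lt_arctan (x : ℝ) : -2 < Real.arctan x := by
  linarith [Real.neg_pi_div_two_lt_arctan x, Real.pi_le_four]

lemma Real.arctan_lt_two (x : ℝ) : Real.arctan x < 2 := by
  linarith [Real.arctan_lt_pi_div_two x, Real.pi_le_four]

/-- `G_α` is an interval graph and `ν(G_α) = ν(G) + 1`. -/
theorem stmt_2 {V : Type*} [Fintype V] (G : SimpleGraph V) (hG : IsIntervalGraph G) :
    IsIntervalGraph (Galpha G) ∧ nu (Galpha G) = nu G + 1 := by
  obtain ⟨R, hR⟩ := hG.exists_nesting_eq_nu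
  let S := (R.compStrictMono Real.arctan_strictMono).alphaExtend
    (fun _ => Real.neg_two_lt_arctan _) (fun _ => Real.arctan_lt_two _)
  have hGα : IsIntervalGraph (Galpha G) := ⟨S⟩
  obtain ⟨T, hT⟩ := hGα.exists_nesting_eq_nu
  refine ⟨hGα, le_antisymm ?_ (hT ▸ T.nu_add_one_le_nesting)⟩
  calc nu (Galpha G) ≤ S.nesting := nu_le_nesting S
    _ ≤ (R.compStrictMono Real.arctan_strictMono).nesting + 1 :=
      IntervalRep.nesting_alphaExtend_le ..
    _ = nu G + 1 := by rw [IntervalRep.nesting_compStrictMono, hR]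
end

section
/- In every interval representation of G_β, at least one endpoint of the interval of the added vertex u is contained in no interval of a vertex of G. -/
/-!
If both endpoints of `I(u)` were covered by intervals of vertices of `G`, then `I(a₁)`, which
meets `I(u)` but no interval of `G`, would lie inside `I(u)`. Then `I(a₂)`, which meets `I(a₁)`,
would meet `I(u)`, although `u` and `a₂` are not adjacent.
-/

open Set

theorem Set.Icc_subset_Icc_of_inter_nonempty_of_notMem {α : Type*} [LinearOrder α]
    {a b c d : α} (h : (Icc a b ∩ Icc c d).Nonempty) (hc : c ∉ Icc a b) (hd : d ∉ Icc a b) :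
    Icc a b ⊆ Icc c d := by
  obtain ⟨p, ⟨hap, hpb⟩, hcp, hpd⟩ := h
  apply Icc_subset_Icc
  · by_contra! hac
    exact hc ⟨hac.le, hcp.trans hpb⟩
  · by_contra! hbd
    exact hd ⟨hap.trans hpd, hbd.le⟩

namespace IntervalRep

variable {V : Type*} {G : SimpleGraph V} (R : IntervalRep G)

theorem notMem_itv_of_not_adj {v w : V} (hvw : v ≠ w) (h : ¬ G.Adj v w) {p : ℝ}
    (hp : p ∈ R.itv w) : p ∉ R.itv v :=
  fun hv => h ((R.adj_iff v w hvw).mpr ⟨p, hv, hp⟩)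

theorem itv_subset_of_endpoints_mem_itv_of_not_adj {u w x y : V} (huw : G.Adj u w)
    (hxw : x ≠ w) (hwx : ¬ G.Adj w x) (hx : R.l u ∈ R.itv x)
    (hyw : y ≠ w) (hwy : ¬ G.Adj w y) (hy : R.r u ∈ R.itv y) :
    R.itv w ⊆ R.itv u :=
  Icc_subset_Icc_of_inter_nonempty_of_notMem ((R.adj_iff w u huw.ne.symm).mp huw.symm)
    (R.notMem_itv_of_not_adj hxw.symm hwx hx) (R.notMem_itv_of_not_adj hyw.symm hwy hy)

theorem adj_of_adj_of_itv_subset {u w z : V} (hwu : R.itv w ⊆ R.itv u) (hzu : z ≠ u)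
    (hwz : G.Adj w z) : G.Adj z u := by
  obtain ⟨p, hz, hw⟩ := (R.adj_iff z w hwz.ne.symm).mp hwz.symm
  exact (R.adj_iff z u hzu).mpr ⟨p, hz, hwu hw⟩

end IntervalRep

theorem stmt_4_general {V : Type*} (G : SimpleGraph V)
    (R : IntervalRep (Gbeta G)) :
    (∀ x : V, R.l (Sum.inr 0) ∉ R.itv (Sum.inl x)) ∨
    (∀ x : V, R.r (Sum.inr 0) ∉ R.itv (Sum.inl x)) := by
  by_contra! h
  obtain ⟨⟨x, hx⟩, y, hy⟩ := h
  have ha₁_sub_u : R.itv (Sum.inr 1) ⊆ R.itv (Sum.inr 0) :=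
    R.itv_subset_of_endpoints_mem_itv_of_not_adj (by simp [Gbeta]) (by simp)
      (by simp [Gbeta]) hx (by simp) (by simp [Gbeta]) hy
  have ha₂_adj_u : (Gbeta G).Adj (Sum.inr 2) (Sum.inr 0) :=
    R.adj_of_adj_of_itv_subset ha₁_sub_u (by simp) (by simp [Gbeta])
  simp [Gbeta] at ha₂_adj_u

/-- in every representation of `G_β`, at least one endpoint of `I(u)` is
contained in no interval of a vertex of `G`. -/
theorem stmt_4 {V : Type*} [Fintype V] (G : SimpleGraph V)
    (R : IntervalRep (Gbeta G)) :
    (∀ x : V, R.l (Sum.inr 0) ∉ R.itv (Sum.inl x)) ∨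
    (∀ x : V, R.r (Sum.inr 0) ∉ R.itv (Sum.inl x)) :=
  stmt_4_general G R
end
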